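/- arXiv:1111.4772 — 8 statements merged into one kernel-verified Lean document; each statement's English description precedes it below -/
import Mathlib

section
/- If S ⊆ Bin(X) is a distributive set of binary operations (every pair of elements of S, including equal pairs, is mutually right distributive), then the submonoid M(S) of Bin(X) generated by S is a distributive set as well. -/
/-- `Bin(X)`, the binary operations on `X`. -/
abbrev BinOp (X : Type*) := X → X → X

/-- The monoid structure on `Bin(X)`: `x (⋆₁·⋆₂) y = (x ⋆₁ y) ⋆₂ y`,
with unit the left projection `x ◁ y = x`. -/
instance (X : Type*) : Monoid (BinOp X) where
  mul f g := fun x y => g (f x y) y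
  one := fun x _ => x
  mul_assoc _ _ _ := rfl
  one_mul _ := rfl
  mul_one _ := rfl

/-- A set of binary operations is distributive if every pair (including equal pairs)
is mutually right distributive. -/
def IsDistribSet {X : Type*} (S : Set (BinOp X)) : Prop :=
  ∀ f ∈ S, ∀ g ∈ S, ∀ x y z : X, f (g x y) z = g (f x z) (f y z)

/-- if `S ⊆ Bin(X)` is a distributive set, then the submonoid of `Bin(X)`
generated by `S` is a distributive set as well. -/
theorem closure_isDistribSet {X : Type*} (S : Set (BinOp X)) (h : IsDistribSet S) :
    IsDistribSet (Submonoid.closure S : Set (BinOp X)) := by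
  intro f hf g hg
  -- Step 1: f ∈ S distributes over any g in the closure
  have step1 : ∀ f ∈ S, ∀ g ∈ Submonoid.closure S,
      ∀ x y z : X, f (g x y) z = g (f x z) (f y z) := by
    intro f hf g hg
    induction hg using Submonoid.closure_induction with
    | mem g hgS => exact h f hf g hgS
    | one => intro x y z; rfl
    | mul g1 g2 _ _ ih1 ih2 =>
      intro x y z
      show f (g2 (g1 x y) y) z = g2 (g1 (f x z) (f y z)) (f y z)
      rw [ih2, ih1]
  -- Step 2: induct on f
  induction hf using Submonoid.closure_induction with
  | mem f hfS => exact step1 f hfS g hg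
  | one => intro x y z; rfl
  | mul f1 f2 _ _ ih1 ih2 =>
    intro x y z
    show f2 (f1 (g x y) z) z = g (f2 (f1 x z) z) (f2 (f1 y z) z)
    rw [ih1, ih2]
end

section
/- For a shelf (X, ⋆), the maps ∂ₙ = Σᵢ (−1)ⁱ dᵢ^⋆ on the free abelian groups Cₙ = ℤX^{n+1} satisfy ∂ₙ₋₁ ∘ ∂ₙ = 0, i.e. (C, ∂) is a chain complex. -/
/-- The `i`-th face map on tuples, for a binary operation `⋆`:
`d₀(x₀,…,xₙ) = (x₁,…,xₙ)` and
`dᵢ(x₀,…,xₙ) = (x₀⋆xᵢ,…,x_{i−1}⋆xᵢ, x_{i+1},…,xₙ)` for `i ≥ 1`. -/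
def dFun {X : Type*} (op : X → X → X) (n : ℕ) (i : Fin (n+1)) (x : Fin (n+1) → X) :
    Fin n → X :=
  fun j => if (j : ℕ) < (i : ℕ) then op (x j.castSucc) (x i) else x j.succ

/-- The chain group `Cₙ = ℤ X^{n+1}`. -/
abbrev CC (X : Type*) (n : ℕ) := (Fin (n+1) → X) →₀ ℤ

/-- The one-term distributive boundary `∂ = Σᵢ (−1)ⁱ dᵢ^⋆ : Cₙ₊₁ → Cₙ`. -/
noncomputable def bd1 {X : Type*} (op : X → X → X) (n : ℕ) : CC X (n+1) →ₗ[ℤ] CC X n :=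
  ∑ i : Fin (n+2), ((-1 : ℤ) ^ (i : ℕ)) • Finsupp.lmapDomain ℤ ℤ (dFun op (n+1) i)

lemma dFun_comp {X : Type*} (op : X → X → X)
    (hsd : ∀ x y z : X, op (op x y) z = op (op x z) (op y z))
    (n i j : ℕ) (hij : i < j) (hj : j ≤ n + 2) :
    (dFun op (n+1) ⟨i, by omega⟩) ∘ (dFun op (n+2) ⟨j, by omega⟩)
      = (dFun op (n+1) ⟨j-1, by omega⟩) ∘ (dFun op (n+2) ⟨i, by omega⟩) := by
  funext x m
  rcases m with ⟨m, hm⟩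
  simp only [Function.comp, dFun, Fin.coe_castSucc, Fin.val_succ, Fin.castSucc_mk, Fin.succ_mk]
  have hj1 : j - 1 + 1 = j := by omega
  simp only [hj1]
  split_ifs <;> first | rfl | omega | (rw [← hsd])

lemma lmap_comp {X : Type*} {n m k : ℕ} (f : (Fin m → X) → (Fin k → X))
    (g : (Fin n → X) → (Fin m → X)) :
    (Finsupp.lmapDomain ℤ ℤ f).comp (Finsupp.lmapDomain ℤ ℤ g)
      = Finsupp.lmapDomain ℤ ℤ (f ∘ g) := by
  apply LinearMap.ext; intro v
  simp [Finsupp.mapDomain_comp]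

lemma hcomp1 {M N P : Type*} [AddCommGroup M] [AddCommGroup N] [AddCommGroup P]
    [Module ℤ M] [Module ℤ N] [Module ℤ P] {ι : Type*} [Fintype ι]
    (f : ι → (N →ₗ[ℤ] P)) (g : M →ₗ[ℤ] N) :
    (∑ i, f i).comp g = ∑ i, (f i).comp g := by
  apply LinearMap.ext; intro v
  simp [LinearMap.sum_apply]

lemma hcomp2 {M N P : Type*} [AddCommGroup M] [AddCommGroup N] [AddCommGroup P]
    [Module ℤ M] [Module ℤ N] [Module ℤ P] {ι : Type*} [Fintype ι]
    (f : ι → (M →ₗ[ℤ] N)) (g : N →ₗ[ℤ] P) :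
    g.comp (∑ i, f i) = ∑ i, g.comp (f i) := by
  apply LinearMap.ext; intro v
  simp [LinearMap.sum_apply]

def invG (n : ℕ) : Fin (n+2) × Fin (n+3) → Fin (n+2) × Fin (n+3) := fun p =>
  if h : (p.1 : ℕ) < (p.2 : ℕ)
  then (⟨(p.2 : ℕ) - 1, by have := p.2.isLt; omega⟩, ⟨(p.1 : ℕ), by have := p.1.isLt; omega⟩)
  else (⟨(p.2 : ℕ), by have := p.1.isLt; omega⟩, ⟨(p.1 : ℕ) + 1, by have := p.1.isLt; omega⟩)

lemma invG_mk (n i j : ℕ) (hi : i < n+2) (hj : j < n+3) :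
    invG n (⟨i, hi⟩, ⟨j, hj⟩) = if h : i < j
      then (⟨j - 1, by omega⟩, ⟨i, by omega⟩)
      else (⟨j, by omega⟩, ⟨i + 1, by omega⟩) := by
  unfold invG
  split_ifs <;> rfl

/-- for a shelf `(X,⋆)`, `∂ₙ₋₁ ∘ ∂ₙ = 0`, i.e. `(C,∂)` is a chain complex. -/
theorem shelf_boundary_squared_zero {X : Type*} (op : X → X → X)
    (hsd : ∀ x y z : X, op (op x y) z = op (op x z) (op y z)) :
    ∀ n : ℕ, (bd1 op n).comp (bd1 op (n+1)) = 0 := by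
  intro n
  unfold bd1
  rw [hcomp1]
  have step : ∀ i : Fin (n+2),
      (((-1 : ℤ) ^ (i : ℕ)) • Finsupp.lmapDomain ℤ ℤ (dFun op (n+1) i)).comp
        (∑ j : Fin (n+3), ((-1 : ℤ) ^ (j : ℕ)) • Finsupp.lmapDomain ℤ ℤ (dFun op (n+2) j))
      = ∑ j : Fin (n+3), ((-1 : ℤ) ^ ((i : ℕ) + (j : ℕ))) •
          Finsupp.lmapDomain ℤ ℤ (dFun op (n+1) i ∘ dFun op (n+2) j) := by
    intro i
    rw [hcomp2]
    refine Finset.sum_congr rfl fun j _ => ?_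
    rw [LinearMap.comp_smul, LinearMap.smul_comp, lmap_comp, smul_smul, ← pow_add,
      add_comm (j : ℕ) (i : ℕ)]
  simp only [step]
  rw [← Finset.sum_product']
  rw [Finset.univ_product_univ]
  set F : Fin (n+2) × Fin (n+3) → (CC X (n+2) →ₗ[ℤ] CC X n) := fun p =>
    ((-1 : ℤ) ^ ((p.1 : ℕ) + (p.2 : ℕ))) •
      Finsupp.lmapDomain ℤ ℤ (dFun op (n+1) p.1 ∘ dFun op (n+2) p.2) with hF
  show ∑ p : Fin (n+2) × Fin (n+3), F p = 0
  have key : ∀ (i j : ℕ) (hi : i < n+2) (hij : i < j) (hj : j ≤ n+2),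
      F (⟨i, hi⟩, ⟨j, by omega⟩) + F (⟨j - 1, by omega⟩, ⟨i, by omega⟩) = 0 := by
    intro i j hi hij hj
    simp only [hF]
    rw [dFun_comp op hsd n i j hij hj, ← add_smul]
    convert zero_smul ℤ _
    have h1 : i + j = (j - 1 + i) + 1 := by omega
    rw [h1, pow_succ]
    ring
  apply Finset.sum_ninvolution (invG n)
  · rintro ⟨⟨i, hi⟩, ⟨j, hj⟩⟩
    rw [invG_mk]
    split_ifs with h
    · exact key i j hi h (by omega)
    · have hk := key j (i+1) (by omega) (by omega) (by omega)
      simp only [Nat.add_sub_cancel] at hk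
      exact (add_comm _ _).trans hk
  · rintro ⟨⟨i, hi⟩, ⟨j, hj⟩⟩ _
    rw [invG_mk]
    split_ifs with h <;>
      · intro heq
        simp only [Prod.mk.injEq, Fin.mk.injEq] at heq
        omega
  · intro a; exact Finset.mem_univ _
  · rintro ⟨⟨i, hi⟩, ⟨j, hj⟩⟩
    have hv := invG_mk n i j hi hj
    rw [hv]
    split_ifs with h
    · rw [invG_mk, dif_neg (by omega)]
      refine Prod.ext (Fin.ext ?_) (Fin.ext ?_) <;> simp <;> omega
    · rw [invG_mk, dif_pos (by omega)]
      refine Prod.ext (Fin.ext ?_) (Fin.ext ?_) <;> simp <;> omega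
end

section
/- If ⋆₁ and ⋆₂ are self-distributive operations on X that are mutually right distributive, then for any scalars a₁, a₂ in a commutative ring R, the map ∂ = a₁∂^{⋆₁} + a₂∂^{⋆₂} on Cₙ(X;R) = R X^{n+1} satisfies ∂∂ = 0. -/
/-- The chain group `Cₙ(X;R) = R X^{n+1}`. -/
abbrev CR (R : Type*) (X : Type*) [CommRing R] (n : ℕ) := (Fin (n+1) → X) →₀ R

/-- The two-term boundary `∂ = a₁ ∂^{⋆₁} + a₂ ∂^{⋆₂} : Cₙ₊₁ → Cₙ`. -/
noncomputable def bd2 {R X : Type*} [CommRing R] (s1 s2 : X → X → X) (a1 a2 : R) (n : ℕ) :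
    CR R X (n+1) →ₗ[R] CR R X n :=
  ∑ i : Fin (n+2), ((-1 : R) ^ (i : ℕ)) •
    (a1 • Finsupp.lmapDomain R R (dFun s1 (n+1) i) +
      a2 • Finsupp.lmapDomain R R (dFun s2 (n+1) i))

lemma dFun_comp_s7 {X : Type*} (s t : X → X → X)
    (hst : ∀ a b c, t (s a b) c = s (t a c) (t b c))
    (n : ℕ) (i : Fin (n+1)) (j : Fin (n+2)) (h : (i : ℕ) < (j : ℕ)) :
    (dFun s n i) ∘ (dFun t (n+1) j) =
      (dFun t n ⟨(j : ℕ) - 1, by omega⟩) ∘ (dFun s (n+1) ⟨(i : ℕ), by omega⟩) := by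
  funext x m
  have fix : ∀ a b : Fin (n+2), (a:ℕ) = (b:ℕ) → x a = x b := fun a b hab => by
    congr 1; exact Fin.ext hab
  simp only [Function.comp, dFun, Fin.coe_castSucc, Fin.val_succ]
  split_ifs <;>
    first
      | omega
      | rfl
      | (apply fix; simp; omega)
      | (congr 1 <;> apply fix <;> simp <;> omega)
      | (rw [← hst]; congr 1 <;>
          first
            | (apply fix; simp; omega)
            | (congr 1 <;> apply fix <;> simp <;> omega))

private lemma sumComp {R M N P : Type*} [CommRing R] [AddCommGroup M] [AddCommGroup N]
    [AddCommGroup P] [Module R M] [Module R N] [Module R P]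
    {ι : Type*} (s : Finset ι) (f : ι → (N →ₗ[R] P)) (g : M →ₗ[R] N) :
    (∑ i ∈ s, f i).comp g = ∑ i ∈ s, (f i).comp g := by
  ext x; simp [LinearMap.sum_apply]

private lemma compSum {R M N P : Type*} [CommRing R] [AddCommGroup M] [AddCommGroup N]
    [AddCommGroup P] [Module R M] [Module R N] [Module R P]
    {ι : Type*} (s : Finset ι) (f : N →ₗ[R] P) (g : ι → (M →ₗ[R] N)) :
    f.comp (∑ i ∈ s, g i) = ∑ i ∈ s, f.comp (g i) := by
  ext x; simp [LinearMap.sum_apply, map_sum]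


/-- if `⋆₁, ⋆₂` are self-distributive and mutually right distributive,
then `∂ = a₁∂^{⋆₁} + a₂∂^{⋆₂}` satisfies `∂∂ = 0` for any scalars `a₁ a₂` in a
commutative ring `R`. -/
theorem two_term_boundary_squared_zero {R X : Type*} [CommRing R]
    (s1 s2 : X → X → X) (a1 a2 : R)
    (h11 : ∀ x y z : X, s1 (s1 x y) z = s1 (s1 x z) (s1 y z))
    (h22 : ∀ x y z : X, s2 (s2 x y) z = s2 (s2 x z) (s2 y z))
    (h12 : ∀ x y z : X, s1 (s2 x y) z = s2 (s1 x z) (s1 y z))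
    (h21 : ∀ x y z : X, s2 (s1 x y) z = s1 (s2 x z) (s2 y z)) :
    ∀ n : ℕ, (bd2 s1 s2 a1 a2 n).comp (bd2 s1 s2 a1 a2 (n+1)) = 0 := by
  intro n
  set op : Bool → X → X → X := fun b => bif b then s1 else s2 with hop
  set co : Bool → R := fun b => bif b then a1 else a2 with hco
  have hyp : ∀ s t : Bool, ∀ a b c : X,
      op t (op s a b) c = op s (op t a c) (op t b c) := by
    rintro (_|_) (_|_) a b c <;> simp [hop] <;>
      first | exact h11 a b c | exact h22 a b c | exact h12 a b c | exact h21 a b c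
  set f : Fin (n+2) × Fin (n+3) × Bool × Bool → (CR R X (n+2) →ₗ[R] CR R X n) :=
    fun p => ((-1 : R) ^ ((p.1 : ℕ) + (p.2.1 : ℕ)) * (co p.2.2.1 * co p.2.2.2)) •
      Finsupp.lmapDomain R R
        (dFun (op p.2.2.1) (n+1) p.1 ∘ dFun (op p.2.2.2) (n+2) p.2.1) with hf
  have key : (bd2 s1 s2 a1 a2 n).comp (bd2 s1 s2 a1 a2 (n+1)) = ∑ p, f p := by
    rw [bd2, bd2, sumComp]
    rw [Fintype.sum_prod_type]
    refine Finset.sum_congr rfl fun i _ => ?_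
    rw [LinearMap.smul_comp, compSum, Finset.smul_sum, Fintype.sum_prod_type]
    refine Finset.sum_congr rfl fun j _ => ?_
    simp only [hf, Fintype.sum_prod_type, Fintype.sum_bool, hop, hco, cond_true, cond_false,
      Finsupp.lmapDomain_comp, LinearMap.comp_smul, LinearMap.comp_add, LinearMap.add_comp,
      LinearMap.smul_comp, smul_smul, smul_add, pow_add]
    module
  rw [key]
  refine Finset.sum_ninvolution
    (fun p => if h : (p.1 : ℕ) < (p.2.1 : ℕ)
      then (⟨(p.2.1 : ℕ) - 1, by omega⟩, ⟨(p.1 : ℕ), by omega⟩, p.2.2.2, p.2.2.1)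
      else (⟨(p.2.1 : ℕ), by omega⟩, ⟨(p.1 : ℕ) + 1, by omega⟩, p.2.2.2, p.2.2.1))
    ?_ ?_ (fun _ => Finset.mem_univ _) ?_
  · rintro ⟨i, j, s, t⟩
    by_cases h : (i : ℕ) < (j : ℕ)
    · simp only [dif_pos h, hf]
      rw [← dFun_comp_s7 (op s) (op t) (hyp s t) (n+1) i j h, ← add_smul]
      convert zero_smul R _ using 2
      have : (i : ℕ) + (j : ℕ) = ((j : ℕ) - 1 + (i : ℕ)) + 1 := by omega
      rw [this, pow_succ]; ring
    · simp only [dif_neg h, hf]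
      have h' : ((⟨(j : ℕ), by omega⟩ : Fin (n+2)) : ℕ) <
          ((⟨(i : ℕ) + 1, by omega⟩ : Fin (n+3)) : ℕ) := by simp; omega
      rw [dFun_comp_s7 (op t) (op s) (hyp t s) (n+1) _ _ h']
      have e1 : (⟨((⟨(i : ℕ) + 1, by omega⟩ : Fin (n+3)) : ℕ) - 1, by simp⟩ : Fin (n+2))
          = i := by apply Fin.ext; simp
      have e2 : (⟨((⟨(j : ℕ), by omega⟩ : Fin (n+2)) : ℕ), by omega⟩ : Fin (n+3)) = j := by
        apply Fin.ext; simp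
      rw [e1, e2, ← add_smul]
      convert zero_smul R _ using 2
      have : (j : ℕ) + ((i : ℕ) + 1) = ((i : ℕ) + (j : ℕ)) + 1 := by omega
      simp only [this, pow_succ]; ring
  · rintro ⟨i, j, s, t⟩ _
    by_cases h : (i : ℕ) < (j : ℕ) <;>
      [skip; skip] <;> simp only [dif_pos, dif_neg, h] <;> intro he <;>
      (have := congrArg (fun q => ((q.2.1 : Fin (n+3)) : ℕ)) he; simp at this; omega)
  · rintro ⟨i, j, s, t⟩
    by_cases h : (i : ℕ) < (j : ℕ)
    · have h2 : ¬ (((⟨(j : ℕ) - 1, by omega⟩ : Fin (n+2)) : ℕ) <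
          ((⟨(i : ℕ), by omega⟩ : Fin (n+3)) : ℕ)) := by simp; omega
      simp only [dif_pos h, dif_neg h2]
      ext <;> simp <;> omega
    · have h2 : (((⟨(j : ℕ), by omega⟩ : Fin (n+2)) : ℕ) <
          ((⟨(i : ℕ) + 1, by omega⟩ : Fin (n+3)) : ℕ)) := by simp; omega
      simp only [dif_neg h, dif_pos h2]
      ext <;> simp
end

section
/- Let X be a multishelf with operations ⋆₁,…,⋆ₖ, t ∈ X, and suppose (x ⋆ᵣ t) ⋆ᵣ t = x ⋆ᵣ t for some r and all x ∈ X. Then the map rₜ(x) = x ⋆ᵣ t is a multishelf retraction of X onto the orbit A = X ⋆ᵣ t, i.e. rₜ is a multishelf homomorphism restricting to the identity on A. -/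
/-- if `X` is a multishelf with operations `⋆₁,…,⋆ₖ`, `t ∈ X` and
`(x ⋆ᵣ t) ⋆ᵣ t = x ⋆ᵣ t` for some `r` and all `x`, then `rₜ(x) = x ⋆ᵣ t` is a multishelf
retraction of `X` onto the orbit `A = X ⋆ᵣ t`: it is a multishelf homomorphism
which restricts to the identity on `A`. -/
theorem orbit_retraction {X : Type*} {k : ℕ} (ops : Fin k → X → X → X)
    (hdist : ∀ (r s : Fin k) (x y z : X),
      ops r (ops s x y) z = ops s (ops r x z) (ops r y z))
    (t : X) (r : Fin k)
    (hidem : ∀ x : X, ops r (ops r x t) t = ops r x t) :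
    (∀ (i : Fin k) (x y : X), ops r (ops i x y) t = ops i (ops r x t) (ops r y t)) ∧
      (∀ y : X, y ∈ {z | ∃ x, z = ops r x t} → ops r y t = y) := by
  refine ⟨fun i x y => hdist r i x y t, fun y ⟨x, hx⟩ => by rw [hx, hidem]⟩
end

section
/- For a spindle (X, ⋆) with face maps dᵢ^⋆ and ∂ⁿ^⋆ = Σ (−1)ⁱ dᵢ^⋆, the map α(x₀,…,xₙ) = (x₀, x₁−x₀, …, xₙ−x_{n−1}) satisfies α ∂^⋆ = ∂^⋆ α on ℤX^{n+1} for every n ≥ 0. -/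
/-- The value of `α` on a basis tuple: `α(x₀,…,xₙ) = (x₀, x₁−x₀, …, xₙ−x_{n−1})`,
expanded multilinearly (each coordinate `i ≥ 1` contributes `xᵢ` or `−x_{i−1}`). -/
noncomputable def alphaB {X : Type*} (n : ℕ) (x : Fin (n+1) → X) : CC X n :=
  ∑ ε : Fin (n+1) → Bool,
    if ε 0 then 0
    else ((-1 : ℤ) ^ (Finset.univ.filter fun i => ε i = true).card) •
      Finsupp.single (fun i : Fin (n+1) =>
        if ε i then x ⟨(i : ℕ) - 1, by have := i.isLt; omega⟩ else x i) 1

/-- The linear map `α : Cₙ → Cₙ`. -/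
noncomputable def alphaL {X : Type*} (n : ℕ) : CC X n →ₗ[ℤ] CC X n :=
  Finsupp.linearCombination ℤ (alphaB n)

/- ### helpers -/

def subT {X : Type*} (n : ℕ) (x : Fin (n+1) → X) (ε : Fin (n+1) → Bool) : Fin (n+1) → X :=
  fun i => if ε i then x ⟨(i : ℕ) - 1, by have := i.isLt; omega⟩ else x i

lemma alphaB_def {X : Type*} (n : ℕ) (x : Fin (n+1) → X) :
    alphaB n x = ∑ ε : Fin (n+1) → Bool,
      if ε 0 then 0
      else ((-1 : ℤ) ^ (Finset.univ.filter fun i => ε i = true).card) •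
        Finsupp.single (subT n x ε) 1 := rfl

def extB {n : ℕ} (p : Fin (n+2)) (b : Bool) (δ : Fin (n+1) → Bool) : Fin (n+2) → Bool :=
  fun j => if h : (j : ℕ) < (p : ℕ) then δ ⟨j, by have := p.isLt; omega⟩
    else if (j : ℕ) = (p : ℕ) then b
    else δ ⟨(j : ℕ) - 1, by have := j.isLt; omega⟩

def resB {n : ℕ} (p : Fin (n+2)) (ε : Fin (n+2) → Bool) : Fin (n+1) → Bool :=
  fun j => if (j : ℕ) < (p : ℕ) then ε ⟨j, by have := j.isLt; omega⟩
    else ε ⟨(j : ℕ) + 1, by have := j.isLt; omega⟩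

lemma extB_lt {n : ℕ} (p : Fin (n+2)) (b : Bool) (δ : Fin (n+1) → Bool)
    (j : Fin (n+2)) (h : (j : ℕ) < (p : ℕ)) :
    extB p b δ j = δ ⟨j, by have := p.isLt; omega⟩ := by
  simp only [extB]; rw [dif_pos h]

lemma extB_same {n : ℕ} (p : Fin (n+2)) (b : Bool) (δ : Fin (n+1) → Bool)
    (j : Fin (n+2)) (h : (j : ℕ) = (p : ℕ)) :
    extB p b δ j = b := by
  simp only [extB]; rw [dif_neg (by omega), if_pos h]

lemma extB_gt {n : ℕ} (p : Fin (n+2)) (b : Bool) (δ : Fin (n+1) → Bool)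
    (j : Fin (n+2)) (h : (p : ℕ) < (j : ℕ)) :
    extB p b δ j = δ ⟨(j : ℕ) - 1, by have := j.isLt; omega⟩ := by
  simp only [extB]; rw [dif_neg (by omega), if_neg (by omega)]

lemma resB_lt {n : ℕ} (p : Fin (n+2)) (ε : Fin (n+2) → Bool)
    (j : Fin (n+1)) (h : (j : ℕ) < (p : ℕ)) :
    resB p ε j = ε ⟨j, by have := j.isLt; omega⟩ := by
  simp only [resB]; rw [if_pos h]

lemma resB_ge {n : ℕ} (p : Fin (n+2)) (ε : Fin (n+2) → Bool)
    (j : Fin (n+1)) (h : (p : ℕ) ≤ (j : ℕ)) :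
    resB p ε j = ε ⟨(j : ℕ) + 1, by have := j.isLt; omega⟩ := by
  simp only [resB]; rw [if_neg (by omega)]

lemma extB_resB {n : ℕ} (p : Fin (n+2)) (ε : Fin (n+2) → Bool) :
    extB p (ε p) (resB p ε) = ε := by
  funext j
  rcases lt_trichotomy (j : ℕ) (p : ℕ) with h | h | h
  · rw [extB_lt _ _ _ _ h, resB_lt _ _ _ (by simp only [Fin.val_mk]; omega)]
  · rw [extB_same _ _ _ _ h]; congr 1; exact Fin.ext h.symm
  · rw [extB_gt _ _ _ _ h, resB_ge _ _ _ (by simp only [Fin.val_mk]; omega)]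
    congr 1; apply Fin.ext; simp only [Fin.val_mk]; omega

lemma resB_extB {n : ℕ} (p : Fin (n+2)) (b : Bool) (δ : Fin (n+1) → Bool) :
    resB p (extB p b δ) = δ := by
  funext j
  rcases lt_or_ge (j : ℕ) (p : ℕ) with h | h
  · rw [resB_lt _ _ _ h, extB_lt _ _ _ _ (by simp only [Fin.val_mk]; omega)]
  · rw [resB_ge _ _ _ h, extB_gt _ _ _ _ (by simp only [Fin.val_mk]; omega)]
    exact congrArg δ (Fin.ext (by simp only [Fin.val_mk]; omega))

lemma succAbove_val {n : ℕ} (p : Fin (n+2)) (j : Fin (n+1)) :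
    ((p.succAbove j : Fin (n+2)) : ℕ) = if (j : ℕ) < (p : ℕ) then (j : ℕ) else (j : ℕ) + 1 := by
  rcases lt_or_ge (j : ℕ) (p : ℕ) with h | h
  · rw [Fin.succAbove_of_castSucc_lt _ _ (by simpa [Fin.lt_def] using h), if_pos h]
    simp
  · rw [Fin.succAbove_of_le_castSucc _ _ (by simpa [Fin.le_def] using h), if_neg (by omega)]
    rfl

lemma extB_succAbove {n : ℕ} (p : Fin (n+2)) (b : Bool) (δ : Fin (n+1) → Bool)
    (j : Fin (n+1)) : extB p b δ (p.succAbove j) = δ j := by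
  have hv := succAbove_val p j
  rcases lt_or_ge (j : ℕ) (p : ℕ) with h | h
  · rw [if_pos h] at hv
    rw [extB_lt _ _ _ _ (by omega)]
    congr 1; exact Fin.ext (by simp only [Fin.val_mk]; omega)
  · rw [if_neg (by omega)] at hv
    rw [extB_gt _ _ _ _ (by omega)]
    congr 1; exact Fin.ext (by simp only [Fin.val_mk]; omega)

lemma card_extB {n : ℕ} (p : Fin (n+2)) (b : Bool) (δ : Fin (n+1) → Bool) :
    (Finset.univ.filter fun i => extB p b δ i = true).card
      = (if b then 1 else 0) + (Finset.univ.filter fun i => δ i = true).card := by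
  rw [Finset.card_filter, Finset.card_filter,
    Fin.sum_univ_succAbove (fun j => if extB p b δ j = true then 1 else 0) p]
  congr 1
  · rw [extB_same _ _ _ _ rfl]
  · exact Finset.sum_congr rfl fun j _ => by rw [extB_succAbove]

lemma app_congr {γ : Sort*} {m : ℕ} (f : Fin m → γ) (a b : ℕ) (ha : a < m) (hb : b < m)
    (h : a = b) : f ⟨a, ha⟩ = f ⟨b, hb⟩ := by subst h; rfl

lemma lemA {X : Type*} (op : X → X → X) (hidem : ∀ y, op y y = y) {n : ℕ}
    (x : Fin (n+2) → X) (k : ℕ) (hk : k < n+1) (ε : Fin (n+2) → Bool)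
    (h1 : ε ⟨k, by omega⟩ = false) (h2 : ε ⟨k+1, by omega⟩ = true) :
    dFun op (n+1) ⟨k, by omega⟩ (subT (n+1) x ε)
      = dFun op (n+1) ⟨k+1, by omega⟩ (subT (n+1) x ε) := by
  funext j
  rcases j with ⟨jv, hj⟩
  simp only [dFun, subT, Fin.castSucc_mk, Fin.succ_mk, Fin.val_mk]
  rcases lt_trichotomy jv k with h | h | h
  · rw [if_pos h, if_pos (by omega : jv < k + 1), h1, h2,
      if_neg Bool.false_ne_true, if_pos rfl]
    exact congrArg (op _) (app_congr x k (k+1-1) (by omega) (by omega) (by omega))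
  · subst h
    rw [if_neg (by omega), if_pos (by omega : jv < jv + 1), h1, h2]
    simp only [Nat.add_sub_cancel]
    exact (hidem _).symm
  · rw [if_neg (show ¬ (jv < k) by omega), if_neg (show ¬ (jv < k + 1) by omega)]

lemma lemB {X : Type*} (op : X → X → X) {n : ℕ} (x : Fin (n+2) → X)
    (i : Fin (n+2)) (δ : Fin (n+1) → Bool)
    (hcond : ∀ h : (i : ℕ) < n+1, δ ⟨(i : ℕ), h⟩ = false) :
    dFun op (n+1) i (subT (n+1) x (extB i false δ))
      = subT n (dFun op (n+1) i x) δ := by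
  have hi := i.isLt
  funext j
  rcases j with ⟨jv, hj⟩
  simp only [dFun, subT, Fin.castSucc_mk, Fin.succ_mk, Fin.val_mk]
  rw [extB_same i false δ i rfl, if_neg Bool.false_ne_true]
  rcases lt_or_ge jv (i : ℕ) with h | h
  · rw [if_pos h,
      extB_lt i false δ ⟨jv, by omega⟩ (by simp only [Fin.val_mk]; omega)]
    simp only [Fin.val_mk]
    rcases Bool.dichotomy (δ ⟨jv, hj⟩) with hδ | hδ <;> rw [hδ]
    · rw [if_neg Bool.false_ne_true, if_neg Bool.false_ne_true, if_pos h]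
    · rw [if_pos rfl, if_pos rfl, if_pos (show jv - 1 < (i : ℕ) by omega)]
  · rw [if_neg (show ¬ (jv < (i : ℕ)) by omega),
      extB_gt i false δ ⟨jv+1, by omega⟩ (by simp only [Fin.val_mk]; omega)]
    simp only [Fin.val_mk]
    rw [app_congr δ (jv+1-1) jv (by omega) hj (by omega)]
    rcases Bool.dichotomy (δ ⟨jv, hj⟩) with hδ | hδ <;> rw [hδ]
    · rw [if_neg Bool.false_ne_true, if_neg Bool.false_ne_true,
        if_neg (show ¬ (jv < (i : ℕ)) by omega)]
    · have hne : (i : ℕ) ≠ jv := by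
        intro he
        rw [app_congr δ jv (i : ℕ) hj (by omega) he.symm, hcond (by omega)] at hδ
        exact Bool.false_ne_true hδ
      rw [if_pos rfl, if_pos rfl, if_neg (show ¬ (jv - 1 < (i : ℕ)) by omega)]
      exact app_congr x (jv+1-1) (jv-1+1) (by omega) (by omega) (by omega)

lemma lemC {X : Type*} (op : X → X → X) {n : ℕ} (x : Fin (n+2) → X)
    (k : ℕ) (hk : k < n+1) (δ : Fin (n+1) → Bool)
    (hδ0 : δ 0 = false) (hδk : δ ⟨k, hk⟩ = true) :
    dFun op (n+1) ⟨k+1, by omega⟩ (subT (n+1) x (extB ⟨k+1, by omega⟩ true δ))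
      = subT n (dFun op (n+1) ⟨k, by omega⟩ x) δ := by
  have hkpos : 0 < k := by
    rcases Nat.eq_zero_or_pos k with h | h
    · exfalso
      have : δ ⟨0, by omega⟩ = false := hδ0
      rw [app_congr δ k 0 hk (by omega) h, this] at hδk
      exact Bool.false_ne_true hδk
    · exact h
  funext j
  rcases j with ⟨jv, hj⟩
  simp only [dFun, subT, Fin.castSucc_mk, Fin.succ_mk, Fin.val_mk]
  rw [extB_same ⟨k+1, by omega⟩ true δ ⟨k+1, by omega⟩ rfl, if_pos rfl]
  rcases lt_or_ge jv (k+1) with h | h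
  · rw [if_pos h,
      extB_lt ⟨k+1, by omega⟩ true δ ⟨jv, by omega⟩ (by simp only [Fin.val_mk]; omega)]
    simp only [Fin.val_mk]
    rcases Bool.dichotomy (δ ⟨jv, hj⟩) with hδ | hδ <;> rw [hδ]
    · have hne : jv ≠ k := by
        intro he
        rw [app_congr δ jv k hj hk he, hδk] at hδ
        exact Bool.false_ne_true hδ.symm
      rw [if_neg Bool.false_ne_true, if_neg Bool.false_ne_true,
        if_pos (show jv < k by omega)]
      exact congrArg (op _) (app_congr x (k+1-1) k (by omega) (by omega) (by omega))
    · rw [if_pos rfl, if_pos rfl, if_pos (show jv - 1 < k by omega)]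
      exact congrArg (op _) (app_congr x (k+1-1) k (by omega) (by omega) (by omega))
  · rw [if_neg (show ¬ (jv < k + 1) by omega),
      extB_gt ⟨k+1, by omega⟩ true δ ⟨jv+1, by omega⟩ (by simp only [Fin.val_mk]; omega)]
    simp only [Fin.val_mk]
    rw [app_congr δ (jv+1-1) jv (by omega) hj (by omega)]
    rcases Bool.dichotomy (δ ⟨jv, hj⟩) with hδ | hδ <;> rw [hδ]
    · rw [if_neg Bool.false_ne_true, if_neg Bool.false_ne_true,
        if_neg (show ¬ (jv < k) by omega)]
    · rw [if_pos rfl, if_pos rfl, if_neg (show ¬ (jv - 1 < k) by omega)]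
      exact app_congr x (jv+1-1) (jv-1+1) (by omega) (by omega) (by omega)

lemma pow_parity (a b : ℕ) (h : a % 2 = b % 2) : (-1:ℤ)^a = (-1)^b := by
  rw [← Nat.div_add_mod a 2, ← Nat.div_add_mod b 2, h, pow_add, pow_add,
    pow_mul, pow_mul]
  norm_num

lemma bool_ne (b : Bool) (h : b = false) : ¬ (b = true) := by simp [h]

/-- signed term coming from `∂(α(x))`. -/
noncomputable def TT {X : Type*} (op : X → X → X) {n : ℕ} (x : Fin (n+2) → X)
    (i : Fin (n+2)) (ε : Fin (n+2) → Bool) : CC X n :=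
  if ε 0 then 0 else
    ((-1:ℤ)^((i:ℕ) + (Finset.univ.filter fun l => ε l = true).card)) •
      Finsupp.single (dFun op (n+1) i (subT (n+1) x ε)) 1

/-- signed term coming from `α(∂(x))`. -/
noncomputable def SS {X : Type*} (op : X → X → X) {n : ℕ} (x : Fin (n+2) → X)
    (i : Fin (n+2)) (δ : Fin (n+1) → Bool) : CC X n :=
  if δ 0 then 0 else
    ((-1:ℤ)^((i:ℕ) + (Finset.univ.filter fun l => δ l = true).card)) •
      Finsupp.single (subT n (dFun op (n+1) i x) δ) 1

lemma L1 {X : Type*} (op : X → X → X) (hidem : ∀ y, op y y = y) {n : ℕ}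
    (x : Fin (n+2) → X) (k : ℕ) (hk : k < n+1) (ε : Fin (n+2) → Bool)
    (h0 : ε 0 = false) (h1 : ε ⟨k, by omega⟩ = false) (h2 : ε ⟨k+1, by omega⟩ = true) :
    TT op x ⟨k, by omega⟩ ε + TT op x ⟨k+1, by omega⟩ ε = 0 := by
  rw [TT, TT, if_neg (bool_ne _ h0), if_neg (bool_ne _ h0),
    lemA op hidem x k hk ε h1 h2]
  simp only [Fin.val_mk]
  rw [show ((-1:ℤ)^(k+1 + (Finset.univ.filter fun l => ε l = true).card))
      = -((-1:ℤ)^(k + (Finset.univ.filter fun l => ε l = true).card)) by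
    rw [show k+1+(Finset.univ.filter fun l => ε l = true).card
        = (k+(Finset.univ.filter fun l => ε l = true).card)+1 by omega, pow_succ]
    ring]
  rw [neg_smul, add_neg_cancel]

lemma L2 {X : Type*} (op : X → X → X) {n : ℕ} (x : Fin (n+2) → X)
    (k : ℕ) (hk : k < n+1) (δ : Fin (n+1) → Bool)
    (hδ0 : δ 0 = false) (hδk : δ ⟨k, hk⟩ = true) :
    TT op x ⟨k+1, by omega⟩ (extB ⟨k+1, by omega⟩ true δ) = SS op x ⟨k, by omega⟩ δ := by
  have he0 : extB (⟨k+1, by omega⟩ : Fin (n+2)) true δ 0 = false := by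
    rw [extB_lt _ _ _ 0 (by simp only [Fin.val_mk]; exact Nat.succ_pos k)]
    exact hδ0
  rw [TT, SS, if_neg (bool_ne _ he0), if_neg (bool_ne _ hδ0),
    lemC op x k hk δ hδ0 hδk, card_extB, if_pos rfl]
  congr 1
  apply pow_parity
  simp only [Fin.val_mk]
  omega

lemma L3 {X : Type*} (op : X → X → X) {n : ℕ} (x : Fin (n+2) → X)
    (i : Fin (n+2)) (δ : Fin (n+1) → Bool)
    (hδ0 : δ 0 = false) (hcond : ∀ h : (i : ℕ) < n+1, δ ⟨(i : ℕ), h⟩ = false) :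
    TT op x i (extB i false δ) = SS op x i δ := by
  have he0 : extB i false δ 0 = false := by
    rcases Nat.eq_zero_or_pos (i : ℕ) with h | h
    · rw [extB_same _ _ _ 0 (by simp [h])]
    · rw [extB_lt _ _ _ 0 (by simpa using h)]; exact hδ0
  rw [TT, SS, if_neg (bool_ne _ he0), if_neg (bool_ne _ hδ0),
    lemB op x i δ hcond, card_extB, if_neg Bool.false_ne_true, Nat.zero_add]

/-- the pairing involution. -/
def gmap {n : ℕ} :
    (Fin (n+2) × (Fin (n+2) → Bool)) ⊕ (Fin (n+2) × (Fin (n+1) → Bool)) →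
    (Fin (n+2) × (Fin (n+2) → Bool)) ⊕ (Fin (n+2) × (Fin (n+1) → Bool))
  | .inl (i, ε) =>
    if ε 0 then .inl (i, ε)
    else if ε i then
      if ε ⟨(i : ℕ)-1, by have := i.isLt; omega⟩ then
        .inr (⟨(i : ℕ)-1, by have := i.isLt; omega⟩, resB i ε)
      else .inl (⟨(i : ℕ)-1, by have := i.isLt; omega⟩, ε)
    else if h : (i : ℕ)+1 < n+2 then
      if ε ⟨(i : ℕ)+1, h⟩ then .inl (⟨(i : ℕ)+1, h⟩, ε)
      else .inr (i, resB i ε)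
    else .inr (i, resB i ε)
  | .inr (i, δ) =>
    if δ 0 then .inr (i, δ)
    else if h : (i : ℕ) < n+1 then
      if δ ⟨(i : ℕ), h⟩ then
        .inl (⟨(i : ℕ)+1, by omega⟩, extB ⟨(i : ℕ)+1, by omega⟩ true δ)
      else .inl (i, extB i false δ)
    else .inl (i, extB i false δ)

lemma fin_pos_of_true {n : ℕ} {ε : Fin (n+2) → Bool} {i : Fin (n+2)}
    (h0 : ε 0 = false) (hi : ε i = true) : 0 < (i : ℕ) := by
  rcases Nat.eq_zero_or_pos (i : ℕ) with h | h
  · exfalso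
    rw [show i = 0 from Fin.ext h, h0] at hi
    exact Bool.false_ne_true hi
  · exact h

lemma resB_zero {n : ℕ} {ε : Fin (n+2) → Bool} {i : Fin (n+2)}
    (h0 : ε 0 = false)
    (hz : (i : ℕ) = 0 → ∀ h : 1 < n+2, ε ⟨1, h⟩ = false) :
    resB i ε 0 = false := by
  rcases Nat.eq_zero_or_pos (i : ℕ) with h | h
  · rw [resB_ge _ _ _ (by simp [h])]
    exact hz h (by omega)
  · rw [resB_lt _ _ _ (by simpa using h)]
    exact h0

lemma gmap_add {X : Type*} (op : X → X → X) (hidem : ∀ y, op y y = y) {n : ℕ}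
    (x : Fin (n+2) → X)
    (a : (Fin (n+2) × (Fin (n+2) → Bool)) ⊕ (Fin (n+2) × (Fin (n+1) → Bool))) :
    Sum.elim (fun p => TT op x p.1 p.2) (fun p => -SS op x p.1 p.2) a
      + Sum.elim (fun p => TT op x p.1 p.2) (fun p => -SS op x p.1 p.2) (gmap a)
      = 0 := by
  rcases a with ⟨i, ε⟩ | ⟨i, δ⟩
  · by_cases h0 : ε 0 = true
    · simp [gmap, if_pos h0, TT]
    · rw [Bool.not_eq_true] at h0
      by_cases hi : ε i = true
      · have ipos : 0 < (i : ℕ) := fin_pos_of_true h0 hi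
        by_cases hp : ε ⟨(i : ℕ)-1, by have := i.isLt; omega⟩ = true
        · simp only [gmap, if_neg (bool_ne _ h0), if_pos hi, if_pos hp,
            Sum.elim_inl, Sum.elim_inr]
          have hδ0 : resB i ε 0 = false := resB_zero h0 (by omega)
          have hδk : resB i ε ⟨(i : ℕ)-1, by have := i.isLt; omega⟩ = true := by
            rw [resB_lt _ _ _ (by simp only [Fin.val_mk]; omega)]
            rw [app_congr ε _ _ _ (by have := i.isLt; omega) rfl]
            exact hp
          have key := L2 op x ((i : ℕ)-1) (by have := i.isLt; omega) (resB i ε) hδ0 hδk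
          have hpiv : (⟨(i : ℕ)-1+1, by have := i.isLt; omega⟩ : Fin (n+2)) = i :=
            Fin.ext (by simp only [Fin.val_mk]; omega)
          rw [hpiv] at key
          have hee := extB_resB i ε
          rw [hi] at hee
          rw [hee] at key
          rw [key, add_neg_cancel]
        · simp only [gmap, if_neg (bool_ne _ h0), if_pos hi, if_neg hp, Sum.elim_inl]
          rw [Bool.not_eq_true] at hp
          have hpiv : (⟨(i : ℕ)-1+1, by have := i.isLt; omega⟩ : Fin (n+2)) = i :=
            Fin.ext (by simp only [Fin.val_mk]; omega)
          have h2 : ε ⟨(i : ℕ)-1+1, by have := i.isLt; omega⟩ = true := by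
            rw [hpiv]; exact hi
          have key := L1 op hidem x ((i : ℕ)-1) (by have := i.isLt; omega) ε h0 hp h2
          rw [show TT op x i ε = TT op x (⟨(i : ℕ)-1+1, by have := i.isLt; omega⟩ : Fin (n+2)) ε from by rw [hpiv]]
          rw [add_comm]
          exact key
      · rw [Bool.not_eq_true] at hi
        by_cases hlt : (i : ℕ)+1 < n+2
        · by_cases hnx : ε ⟨(i : ℕ)+1, hlt⟩ = true
          · simp only [gmap, if_neg (bool_ne _ h0), if_neg (bool_ne _ hi),
              dif_pos hlt, if_pos hnx, Sum.elim_inl]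
            have h1 : ε ⟨(i : ℕ), by omega⟩ = false := by
              rw [show (⟨(i : ℕ), by omega⟩ : Fin (n+2)) = i from Fin.ext rfl]
              exact hi
            have key := L1 op hidem x (i : ℕ) (by omega) ε h0 h1 hnx
            rw [show (⟨(i : ℕ), by omega⟩ : Fin (n+2)) = i from Fin.ext rfl] at key
            exact key
          · rw [Bool.not_eq_true] at hnx
            simp only [gmap, if_neg (bool_ne _ h0), if_neg (bool_ne _ hi),
              dif_pos hlt, if_neg (bool_ne _ hnx), Sum.elim_inl, Sum.elim_inr]
            have hδ0 : resB i ε 0 = false := resB_zero h0 (by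
              intro hiz h
              rw [app_congr ε 1 ((i : ℕ)+1) h (by omega) (by omega)]
              exact hnx)
            have hcond : ∀ h : (i : ℕ) < n+1, resB i ε ⟨(i : ℕ), h⟩ = false := by
              intro h
              rw [resB_ge _ _ _ (by simp only [Fin.val_mk]; omega)]
              rw [app_congr ε _ _ _ hlt (by simp only [Fin.val_mk])]
              exact hnx
            have key := L3 op x i (resB i ε) hδ0 hcond
            have hee := extB_resB i ε
            rw [hi] at hee
            rw [hee] at key
            rw [key, add_neg_cancel]
        · simp only [gmap, if_neg (bool_ne _ h0), if_neg (bool_ne _ hi),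
            dif_neg hlt, Sum.elim_inl, Sum.elim_inr]
          have hδ0 : resB i ε 0 = false := resB_zero h0 (by omega)
          have key := L3 op x i (resB i ε) hδ0 (fun h => absurd h (by omega))
          rw [show (false : Bool) = ε i from hi.symm, extB_resB] at key
          rw [key, add_neg_cancel]
  · by_cases h0 : δ 0 = true
    · simp [gmap, if_pos h0, SS]
    · rw [Bool.not_eq_true] at h0
      by_cases hlt : (i : ℕ) < n+1
      · by_cases hdi : δ ⟨(i : ℕ), hlt⟩ = true
        · simp only [gmap, if_neg (bool_ne _ h0), dif_pos hlt, if_pos hdi,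
            Sum.elim_inr, Sum.elim_inl]
          have key := L2 op x (i : ℕ) hlt δ h0 hdi
          rw [show (⟨(i : ℕ), by omega⟩ : Fin (n+2)) = i from Fin.ext rfl] at key
          rw [key, neg_add_cancel]
        · rw [Bool.not_eq_true] at hdi
          simp only [gmap, if_neg (bool_ne _ h0), dif_pos hlt,
            if_neg (bool_ne _ hdi), Sum.elim_inr, Sum.elim_inl]
          have key := L3 op x i δ h0 (fun h => hdi)
          rw [key, neg_add_cancel]
      · simp only [gmap, if_neg (bool_ne _ h0), dif_neg hlt, Sum.elim_inr,
          Sum.elim_inl]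
        have key := L3 op x i δ h0 (fun h => absurd h hlt)
        rw [key, neg_add_cancel]

lemma extB_zero {n : ℕ} (p : Fin (n+2)) (b : Bool) (δ : Fin (n+1) → Bool)
    (hδ0 : δ 0 = false) (h : (p : ℕ) = 0 → b = false) : extB p b δ 0 = false := by
  rcases Nat.eq_zero_or_pos (p : ℕ) with hp | hp
  · rw [extB_same _ _ _ 0 (by simp [hp])]
    exact h hp
  · rw [extB_lt _ _ _ 0 (by simpa using hp)]
    exact hδ0

lemma gmap_invol {n : ℕ}
    (a : (Fin (n+2) × (Fin (n+2) → Bool)) ⊕ (Fin (n+2) × (Fin (n+1) → Bool))) :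
    gmap (gmap a) = a := by
  rcases a with ⟨i, ε⟩ | ⟨i, δ⟩
  · by_cases h0 : ε 0 = true
    · simp only [gmap, if_pos h0]
    · rw [Bool.not_eq_true] at h0
      by_cases hi : ε i = true
      · have ipos : 0 < (i : ℕ) := fin_pos_of_true h0 hi
        by_cases hp : ε ⟨(i : ℕ)-1, by have := i.isLt; omega⟩ = true
        · -- ga = inr (⟨i-1⟩, resB i ε)
          rw [show gmap (.inl (i, ε)) = .inr (⟨(i : ℕ)-1, by have := i.isLt; omega⟩, resB i ε) from by
            simp only [gmap, if_neg (bool_ne _ h0), if_pos hi, if_pos hp]]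
          have hδ0 : resB i ε 0 = false := resB_zero h0 (by omega)
          have hδk : resB i ε ⟨(i : ℕ)-1, by have := i.isLt; omega⟩ = true := by
            rw [resB_lt _ _ _ (by simp only [Fin.val_mk]; omega)]
            rw [app_congr ε _ _ _ (by have := i.isLt; omega) rfl]
            exact hp
          simp only [gmap, if_neg (bool_ne _ hδ0),
            dif_pos (show ((⟨(i : ℕ)-1, by have := i.isLt; omega⟩ : Fin (n+2)) : ℕ) < n+1 by
              simp only [Fin.val_mk]; omega)]
          rw [if_pos (show resB i ε ⟨((⟨(i : ℕ)-1, by have := i.isLt; omega⟩ : Fin (n+2)) : ℕ), by simp only [Fin.val_mk]; omega⟩ = true from hδk)]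
          have hpiv : (⟨((⟨(i : ℕ)-1, by have := i.isLt; omega⟩ : Fin (n+2)) : ℕ)+1, by simp only [Fin.val_mk]; omega⟩ : Fin (n+2)) = i :=
            Fin.ext (by simp only [Fin.val_mk]; omega)
          rw [hpiv]
          have hee := extB_resB i ε
          rw [hi] at hee
          rw [hee]
        · -- ga = inl (⟨i-1⟩, ε) ; cancellation pair
          rw [Bool.not_eq_true] at hp
          rw [show gmap (.inl (i, ε)) = .inl (⟨(i : ℕ)-1, by have := i.isLt; omega⟩, ε) from by
            simp only [gmap, if_neg (bool_ne _ h0), if_pos hi, if_neg (bool_ne _ hp)]]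
          simp only [gmap, if_neg (bool_ne _ h0), if_neg (bool_ne _ hp)]
          rw [dif_pos (show ((⟨(i : ℕ)-1, by have := i.isLt; omega⟩ : Fin (n+2)) : ℕ)+1 < n+2 by
            simp only [Fin.val_mk]; omega)]
          have hpiv : (⟨((⟨(i : ℕ)-1, by have := i.isLt; omega⟩ : Fin (n+2)) : ℕ)+1, by simp only [Fin.val_mk]; omega⟩ : Fin (n+2)) = i :=
            Fin.ext (by simp only [Fin.val_mk]; omega)
          rw [if_pos (show ε ⟨((⟨(i : ℕ)-1, by have := i.isLt; omega⟩ : Fin (n+2)) : ℕ)+1, by simp only [Fin.val_mk]; omega⟩ = true from by rw [hpiv]; exact hi)]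
          rw [hpiv]
      · rw [Bool.not_eq_true] at hi
        by_cases hlt : (i : ℕ)+1 < n+2
        · by_cases hnx : ε ⟨(i : ℕ)+1, hlt⟩ = true
          · -- ga = inl (⟨i+1⟩, ε) ; cancellation pair
            rw [show gmap (.inl (i, ε)) = .inl (⟨(i : ℕ)+1, hlt⟩, ε) from by
              simp only [gmap, if_neg (bool_ne _ h0), if_neg (bool_ne _ hi),
                dif_pos hlt, if_pos hnx]]
            simp only [gmap, if_neg (bool_ne _ h0)]
            rw [if_pos hnx]
            rw [if_neg (bool_ne _ (show ε ⟨((⟨(i : ℕ)+1, hlt⟩ : Fin (n+2)) : ℕ)-1, by simp only [Fin.val_mk]; omega⟩ = false from by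
              rw [app_congr ε _ (i : ℕ) _ i.isLt (by simp only [Fin.val_mk]; omega)]
              exact hi))]
            rw [show (⟨((⟨(i : ℕ)+1, hlt⟩ : Fin (n+2)) : ℕ)-1, by simp only [Fin.val_mk]; omega⟩ : Fin (n+2)) = i from
              Fin.ext (by simp only [Fin.val_mk]; omega)]
          · -- ga = inr (i, resB i ε)
            rw [Bool.not_eq_true] at hnx
            rw [show gmap (.inl (i, ε)) = .inr (i, resB i ε) from by
              simp only [gmap, if_neg (bool_ne _ h0), if_neg (bool_ne _ hi),
                dif_pos hlt, if_neg (bool_ne _ hnx)]]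
            have hδ0 : resB i ε 0 = false := resB_zero h0 (by
              intro hiz h
              rw [app_congr ε 1 ((i : ℕ)+1) h hlt (by omega)]
              exact hnx)
            simp only [gmap, if_neg (bool_ne _ hδ0), dif_pos (show (i : ℕ) < n+1 by omega)]
            rw [if_neg (bool_ne _ (show resB i ε ⟨(i : ℕ), by omega⟩ = false from by
              rw [resB_ge _ _ _ (by simp only [Fin.val_mk]; omega)]
              rw [app_congr ε _ _ _ hlt (by simp only [Fin.val_mk])]
              exact hnx))]
            have hee := extB_resB i ε
            rw [hi] at hee
            rw [hee]
        · -- i = n+1 ; ga = inr (i, resB i ε)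
          rw [show gmap (.inl (i, ε)) = .inr (i, resB i ε) from by
            simp only [gmap, if_neg (bool_ne _ h0), if_neg (bool_ne _ hi), dif_neg hlt]]
          have hδ0 : resB i ε 0 = false := resB_zero h0 (by omega)
          simp only [gmap, if_neg (bool_ne _ hδ0), dif_neg (show ¬ (i : ℕ) < n+1 by omega)]
          have hee := extB_resB i ε
          rw [hi] at hee
          rw [hee]
  · by_cases h0 : δ 0 = true
    · simp only [gmap, if_pos h0]
    · rw [Bool.not_eq_true] at h0
      by_cases hlt : (i : ℕ) < n+1
      · by_cases hdi : δ ⟨(i : ℕ), hlt⟩ = true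
        · -- ga = inl (⟨i+1⟩, extB ⟨i+1⟩ true δ)
          rw [show gmap (.inr (i, δ)) = .inl (⟨(i : ℕ)+1, by omega⟩, extB ⟨(i : ℕ)+1, by omega⟩ true δ) from by
            simp only [gmap, if_neg (bool_ne _ h0), dif_pos hlt, if_pos hdi]]
          have he0 : extB (⟨(i : ℕ)+1, by omega⟩ : Fin (n+2)) true δ 0 = false :=
            extB_zero _ _ _ h0 (by simp only [Fin.val_mk]; omega)
          have hi' : extB (⟨(i : ℕ)+1, by omega⟩ : Fin (n+2)) true δ ⟨(i : ℕ)+1, by omega⟩ = true :=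
            extB_same _ _ _ _ rfl
          have hp' : extB (⟨(i : ℕ)+1, by omega⟩ : Fin (n+2)) true δ ⟨((⟨(i : ℕ)+1, by omega⟩ : Fin (n+2)) : ℕ)-1, by simp only [Fin.val_mk]; omega⟩ = true := by
            rw [extB_lt _ _ _ _ (by simp only [Fin.val_mk]; omega)]
            rw [app_congr δ _ (i : ℕ) _ hlt (by simp only [Fin.val_mk]; omega)]
            exact hdi
          simp only [gmap, if_neg (bool_ne _ he0)]
          rw [if_pos hi', if_pos hp']
          rw [show (⟨((⟨(i : ℕ)+1, by omega⟩ : Fin (n+2)) : ℕ)-1, by simp only [Fin.val_mk]; omega⟩ : Fin (n+2)) = i from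
            Fin.ext (by simp only [Fin.val_mk]; omega)]
          rw [resB_extB]
        · -- ga = inl (i, extB i false δ)
          rw [Bool.not_eq_true] at hdi
          rw [show gmap (.inr (i, δ)) = .inl (i, extB i false δ) from by
            simp only [gmap, if_neg (bool_ne _ h0), dif_pos hlt, if_neg (bool_ne _ hdi)]]
          have he0 : extB i false δ 0 = false := extB_zero _ _ _ h0 (fun _ => rfl)
          have hi' : extB i false δ i = false := extB_same _ _ _ _ rfl
          simp only [gmap, if_neg (bool_ne _ he0), if_neg (bool_ne _ hi'),
            dif_pos (show (i : ℕ)+1 < n+2 by omega)]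
          rw [if_neg (bool_ne _ (show extB i false δ ⟨(i : ℕ)+1, by omega⟩ = false from by
            rw [extB_gt _ _ _ _ (by simp only [Fin.val_mk]; omega)]
            rw [app_congr δ _ (i : ℕ) _ hlt (by simp only [Fin.val_mk]; omega)]
            exact hdi))]
          rw [resB_extB]
      · -- ga = inl (i, extB i false δ), i = n+1
        rw [show gmap (.inr (i, δ)) = .inl (i, extB i false δ) from by
          simp only [gmap, if_neg (bool_ne _ h0), dif_neg hlt]]
        have he0 : extB i false δ 0 = false := extB_zero _ _ _ h0 (fun _ => rfl)
        have hi' : extB i false δ i = false := extB_same _ _ _ _ rfl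
        simp only [gmap, if_neg (bool_ne _ he0), if_neg (bool_ne _ hi'),
          dif_neg (show ¬ (i : ℕ)+1 < n+2 by omega)]
        rw [resB_extB]

lemma gmap_ne {X : Type*} (op : X → X → X) {n : ℕ} (x : Fin (n+2) → X)
    (a : (Fin (n+2) × (Fin (n+2) → Bool)) ⊕ (Fin (n+2) × (Fin (n+1) → Bool)))
    (hF : Sum.elim (fun p => TT op x p.1 p.2) (fun p => -SS op x p.1 p.2) a ≠ 0) :
    gmap a ≠ a := by
  rcases a with ⟨i, ε⟩ | ⟨i, δ⟩
  · have h0 : ε 0 = false := by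
      by_contra h
      rw [Bool.not_eq_false] at h
      exact hF (by simp [TT, if_pos h])
    by_cases hi : ε i = true
    · have ipos : 0 < (i : ℕ) := fin_pos_of_true h0 hi
      by_cases hp : ε ⟨(i : ℕ)-1, by have := i.isLt; omega⟩ = true
      · rw [show gmap (.inl (i, ε)) = .inr (⟨(i : ℕ)-1, by have := i.isLt; omega⟩, resB i ε) from by
          simp only [gmap, if_neg (bool_ne _ h0), if_pos hi, if_pos hp]]
        simp
      · rw [show gmap (.inl (i, ε)) = .inl (⟨(i : ℕ)-1, by have := i.isLt; omega⟩, ε) from by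
          simp only [gmap, if_neg (bool_ne _ h0), if_pos hi, if_neg hp]]
        intro hc
        rw [Sum.inl.injEq, Prod.mk.injEq] at hc
        have := congrArg Fin.val hc.1
        simp only [Fin.val_mk] at this
        omega
    · rw [Bool.not_eq_true] at hi
      by_cases hlt : (i : ℕ)+1 < n+2
      · by_cases hnx : ε ⟨(i : ℕ)+1, hlt⟩ = true
        · rw [show gmap (.inl (i, ε)) = .inl (⟨(i : ℕ)+1, hlt⟩, ε) from by
            simp only [gmap, if_neg (bool_ne _ h0), if_neg (bool_ne _ hi),
              dif_pos hlt, if_pos hnx]]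
          intro hc
          rw [Sum.inl.injEq, Prod.mk.injEq] at hc
          have := congrArg Fin.val hc.1
          simp only [Fin.val_mk] at this
          omega
        · rw [show gmap (.inl (i, ε)) = .inr (i, resB i ε) from by
            simp only [gmap, if_neg (bool_ne _ h0), if_neg (bool_ne _ hi),
              dif_pos hlt, if_neg hnx]]
          simp
      · rw [show gmap (.inl (i, ε)) = .inr (i, resB i ε) from by
          simp only [gmap, if_neg (bool_ne _ h0), if_neg (bool_ne _ hi), dif_neg hlt]]
        simp
  · have h0 : δ 0 = false := by
      by_contra h
      rw [Bool.not_eq_false] at h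
      exact hF (by simp [SS, if_pos h])
    by_cases hlt : (i : ℕ) < n+1
    · by_cases hdi : δ ⟨(i : ℕ), hlt⟩ = true
      · rw [show gmap (.inr (i, δ)) = .inl (⟨(i : ℕ)+1, by omega⟩, extB ⟨(i : ℕ)+1, by omega⟩ true δ) from by
          simp only [gmap, if_neg (bool_ne _ h0), dif_pos hlt, if_pos hdi]]
        simp
      · rw [show gmap (.inr (i, δ)) = .inl (i, extB i false δ) from by
          simp only [gmap, if_neg (bool_ne _ h0), dif_pos hlt, if_neg hdi]]
        simp
    · rw [show gmap (.inr (i, δ)) = .inl (i, extB i false δ) from by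
        simp only [gmap, if_neg (bool_ne _ h0), dif_neg hlt]]
      simp

lemma sum_zero {X : Type*} (op : X → X → X) (hidem : ∀ y, op y y = y) {n : ℕ}
    (x : Fin (n+2) → X) :
    ∑ a : (Fin (n+2) × (Fin (n+2) → Bool)) ⊕ (Fin (n+2) × (Fin (n+1) → Bool)),
      Sum.elim (fun p => TT op x p.1 p.2) (fun p => -SS op x p.1 p.2) a = 0 :=
  Finset.sum_involution (fun a _ => gmap a) (fun a _ => gmap_add op hidem x a)
    (fun a _ hF => gmap_ne op x a hF) (fun a _ => Finset.mem_univ _)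
    (fun a _ => gmap_invol a)

set_option maxHeartbeats 2000000 in
lemma key_eq {X : Type*} (op : X → X → X) (hidem : ∀ y, op y y = y) (n : ℕ)
    (x : Fin (n+2) → X) :
    alphaL n (bd1 op n (Finsupp.single x 1))
      = bd1 op n (alphaL (n+1) (Finsupp.single x 1)) := by
  have bs : ∀ (y : Fin (n+2) → X) (b : ℤ), bd1 op n (Finsupp.single y b)
      = ∑ i : Fin (n+2), ((-1:ℤ)^(i : ℕ)) • Finsupp.single (dFun op (n+1) i y) b := by
    intro y b
    rw [bd1, LinearMap.sum_apply]
    refine Finset.sum_congr rfl fun i _ => ?_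
    rw [LinearMap.smul_apply, Finsupp.lmapDomain_apply, Finsupp.mapDomain_single]
  have e1 : alphaL n (bd1 op n (Finsupp.single x 1))
      = ∑ i : Fin (n+2), ∑ δ : Fin (n+1) → Bool, SS op x i δ := by
    rw [bs x 1, map_sum]
    refine Finset.sum_congr rfl fun i _ => ?_
    rw [map_smul, alphaL, Finsupp.linearCombination_single, one_smul, alphaB_def,
      Finset.smul_sum]
    refine Finset.sum_congr rfl fun δ _ => ?_
    rw [SS, smul_ite, smul_zero, smul_smul, ← pow_add]
  have e2 : bd1 op n (alphaL (n+1) (Finsupp.single x 1))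
      = ∑ ε : (Fin (n+2) → Bool), ∑ i : Fin (n+2), TT op x i ε := by
    rw [alphaL, Finsupp.linearCombination_single, one_smul, alphaB_def, map_sum]
    refine Finset.sum_congr rfl fun ε _ => ?_
    by_cases h0 : ε 0 = true
    · rw [if_pos h0, map_zero]
      exact (Finset.sum_eq_zero fun i _ => by rw [TT, if_pos h0]).symm
    · rw [Bool.not_eq_true] at h0
      rw [if_neg (bool_ne _ h0), map_smul, bs _ 1, Finset.smul_sum]
      refine Finset.sum_congr rfl fun i _ => ?_
      rw [TT, if_neg (bool_ne _ h0), smul_smul, ← pow_add,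
        show (Finset.univ.filter fun l => ε l = true).card + (i : ℕ)
          = (i : ℕ) + (Finset.univ.filter fun l => ε l = true).card from by omega]
  have hz := sum_zero op hidem x (n := n)
  rw [Fintype.sum_sum_type] at hz
  simp only [Sum.elim_inl, Sum.elim_inr] at hz
  have hB : (∑ p : Fin (n+2) × (Fin (n+1) → Bool), -SS op x p.1 p.2)
      = -∑ p : Fin (n+2) × (Fin (n+1) → Bool), SS op x p.1 p.2 := by
    rw [Finset.sum_neg_distrib]
  rw [hB] at hz
  have hAB := add_neg_eq_zero.mp hz
  rw [e1, e2]
  calc (∑ i : Fin (n+2), ∑ δ : Fin (n+1) → Bool, SS op x i δ)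
      = ∑ p : Fin (n+2) × (Fin (n+1) → Bool), SS op x p.1 p.2 :=
        (Fintype.sum_prod_type (fun p => SS op x p.1 p.2)).symm
    _ = ∑ p : Fin (n+2) × (Fin (n+2) → Bool), TT op x p.1 p.2 := hAB.symm
    _ = ∑ i : Fin (n+2), ∑ ε : (Fin (n+2) → Bool), TT op x i ε :=
        Fintype.sum_prod_type (fun p => TT op x p.1 p.2)
    _ = ∑ ε : (Fin (n+2) → Bool), ∑ i : Fin (n+2), TT op x i ε := Finset.sum_comm

/-- for a spindle `(X,⋆)`, `α ∂^⋆ = ∂^⋆ α` in every degree. -/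
theorem alpha_chain_map {X : Type*} (op : X → X → X)
    (hidem : ∀ x : X, op x x = x)
    (hsd : ∀ x y z : X, op (op x y) z = op (op x z) (op y z)) :
    ∀ n : ℕ, (alphaL n).comp (bd1 op n) = (bd1 op n).comp (alphaL (n+1)) := by
  intro n
  refine Finsupp.lhom_ext' fun y => LinearMap.ext_ring ?_
  simp only [LinearMap.comp_apply, Finsupp.lsingle_apply]
  exact key_eq op hidem n y
end

section
/- Let X be a multispindle with an element t forming a one-element submultispindle, with multi-term differential of scalar sum Σ = a₁+…+aₖ. If Σ = 0 then Hₙ({t}) ≅ ℤ for all n ≥ 0; if Σ ≠ 0 then H₀({t}) ≅ ℤ, Hₙ({t}) = 0 for n > 0 even, and Hₙ({t}) ≅ ℤ/Σ for n odd. -/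
/-- The multi-term boundary `∂ = Σᵢ (−1)ⁱ Σᵣ aᵣ dᵢ^{⋆ᵣ} : Cₙ₊₁ → Cₙ`. -/
noncomputable def bdL {X : Type*} {k : ℕ} (ops : Fin k → X → X → X) (a : Fin k → ℤ) (n : ℕ) :
    CC X (n+1) →ₗ[ℤ] CC X n :=
  ∑ i : Fin (n+2), ∑ r : Fin k,
    (((-1 : ℤ) ^ (i : ℕ)) * a r) • Finsupp.lmapDomain ℤ ℤ (dFun (ops r) (n+1) i)

/-- The cycles: everything in degree `0`, `ker ∂ₙ` in degree `n ≥ 1`. -/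
noncomputable def ZC {X : Type*} {k : ℕ} (ops : Fin k → X → X → X) (a : Fin k → ℤ) :
    (n : ℕ) → Submodule ℤ (CC X n)
  | 0 => ⊤
  | n+1 => LinearMap.ker (bdL ops a n)

/-- The `n`-th homology of the multi-term distributive chain complex. -/
noncomputable abbrev HC {X : Type*} {k : ℕ} (ops : Fin k → X → X → X) (a : Fin k → ℤ)
    (n : ℕ) :=
  ZC ops a n ⧸
    Submodule.comap (ZC ops a n).subtype (LinearMap.range (bdL ops a n))

/-!
Over a one-point set every tuple is `(t, …, t)` and every face map fixes it, so `Cₙ ≅ ℤ` and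
`∂ : Cₙ₊₁ → Cₙ` is multiplication by `(Σᵢ₌₀ⁿ⁺¹ (−1)ⁱ) · Σ`, i.e. by `0` for `n` even and by `Σ`
for `n` odd. The homology of `ℤ ←0− ℤ ←Σ− ℤ ←0− ℤ ←Σ− ⋯` is then read off degree by degree.
-/

namespace PointHomology

variable {X : Type*} [Unique X] {k : ℕ}

noncomputable def chainEquiv (X : Type*) [Unique X] (n : ℕ) : CC X n ≃ₗ[ℤ] ℤ :=
  Finsupp.uniqueLinearEquiv ℤ ℤ default

lemma chainEquiv_mapDomain {m n : ℕ} (f : (Fin (m+1) → X) → (Fin (n+1) → X)) (x : CC X m) :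
    chainEquiv X n (Finsupp.mapDomain f x) = chainEquiv X m x := by
  show Finsupp.mapDomain f x default = x default
  rw [← Subsingleton.elim (f default) default,
    Finsupp.mapDomain_apply fun _ _ _ => Subsingleton.elim _ _]

lemma sum_neg_one_pow_fin (n : ℕ) :
    ∑ i : Fin (n+2), (-1 : ℤ) ^ (i : ℕ) = if Even n then 0 else 1 := by
  rw [Fin.sum_univ_eq_sum_range (fun i => (-1 : ℤ) ^ i), neg_one_geom_sum]
  simp [Nat.even_add_one]

def boundaryCoeff (a : Fin k → ℤ) (n : ℕ) : ℤ := if Even n then 0 else ∑ r, a r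

lemma chainEquiv_bdL (ops : Fin k → X → X → X) (a : Fin k → ℤ) (n : ℕ) (x : CC X (n+1)) :
    chainEquiv X n (bdL ops a n x) = boundaryCoeff a n * chainEquiv X (n+1) x := by
  calc chainEquiv X n (bdL ops a n x)
      = ∑ i : Fin (n+2), ∑ r : Fin k, ((-1 : ℤ) ^ (i : ℕ) * a r) * chainEquiv X (n+1) x := by
        simp only [bdL, LinearMap.sum_apply, LinearMap.smul_apply, map_sum, map_smul,
          smul_eq_mul, Finsupp.lmapDomain_apply, chainEquiv_mapDomain]
    _ = (∑ i : Fin (n+2), (-1 : ℤ) ^ (i : ℕ)) * (∑ r, a r) * chainEquiv X (n+1) x := by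
        rw [Finset.sum_mul_sum, Finset.sum_mul]
        simp only [Finset.sum_mul]
    _ = boundaryCoeff a n * chainEquiv X (n+1) x := by
        rw [sum_neg_one_pow_fin, boundaryCoeff]
        split_ifs <;> simp

lemma bdL_eq_zero (ops : Fin k → X → X → X) (a : Fin k → ℤ) {n : ℕ}
    (h : boundaryCoeff a n = 0) : bdL ops a n = 0 :=
  LinearMap.ext fun x => (chainEquiv X n).injective <| by
    simp [chainEquiv_bdL, h]

lemma bdL_injective (ops : Fin k → X → X → X) (a : Fin k → ℤ) {n : ℕ}
    (h : boundaryCoeff a n ≠ 0) : Function.Injective (bdL ops a n) := fun x y hxy =>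
  (chainEquiv X (n+1)).injective <| mul_left_cancel₀ h <| by
    rw [← chainEquiv_bdL, ← chainEquiv_bdL, hxy]

lemma ZC_succ_eq_top (ops : Fin k → X → X → X) (a : Fin k → ℤ) {n : ℕ}
    (h : boundaryCoeff a n = 0) : ZC ops a (n+1) = ⊤ := by
  rw [ZC, bdL_eq_zero ops a h, LinearMap.ker_zero]

lemma mem_range_bdL_iff (ops : Fin k → X → X → X) (a : Fin k → ℤ) {n : ℕ} (y : CC X n) :
    y ∈ LinearMap.range (bdL ops a n) ↔ boundaryCoeff a n ∣ chainEquiv X n y := by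
  constructor
  · rintro ⟨x, rfl⟩
    exact ⟨_, chainEquiv_bdL ops a n x⟩
  · rintro ⟨c, hc⟩
    refine ⟨(chainEquiv X (n+1)).symm c, (chainEquiv X n).injective ?_⟩
    rw [chainEquiv_bdL, hc, LinearEquiv.apply_symm_apply]

lemma homology_equiv_zmod (ops : Fin k → X → X → X) (a : Fin k → ℤ) {n : ℕ}
    (hZ : ZC ops a n = ⊤) :
    Nonempty (HC ops a n ≃ₗ[ℤ] ZMod (boundaryCoeff a n).natAbs) := by
  let ψ : ZC ops a n →ₗ[ℤ] ZMod (boundaryCoeff a n).natAbs :=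
    (Int.castAddHom _).toIntLinearMap ∘ₗ (chainEquiv X n).toLinearMap ∘ₗ (ZC ops a n).subtype
  have hψ : Function.Surjective ψ := fun z => by
    obtain ⟨c, rfl⟩ := ZMod.intCast_surjective z
    exact ⟨⟨(chainEquiv X n).symm c, hZ ▸ trivial⟩, by simp [ψ]⟩
  have hker : Submodule.comap (ZC ops a n).subtype (LinearMap.range (bdL ops a n)) =
      LinearMap.ker ψ := by
    ext x
    simp only [Submodule.mem_comap, Submodule.coe_subtype, mem_range_bdL_iff, LinearMap.mem_ker]
    simp [ψ, ZMod.intCast_zmod_eq_zero_iff_dvd]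
  exact ⟨(Submodule.quotEquivOfEq _ _ hker).trans (ψ.quotKerEquivOfSurjective hψ)⟩

lemma homology_subsingleton (ops : Fin k → X → X → X) (a : Fin k → ℤ) {n : ℕ}
    (h : boundaryCoeff a n ≠ 0) : Subsingleton (HC ops a (n+1)) := by
  have : ZC ops a (n+1) = ⊥ := LinearMap.ker_eq_bot.mpr (bdL_injective ops a h)
  have : Subsingleton (ZC ops a (n+1)) := by rw [this]; infer_instance
  exact (Submodule.mkQ_surjective _).subsingleton

lemma homology_equiv_int (ops : Fin k → X → X → X) (a : Fin k → ℤ) {n : ℕ}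
    (hZ : ZC ops a n = ⊤) (h : boundaryCoeff a n = 0) : Nonempty (HC ops a n ≃ₗ[ℤ] ℤ) := by
  obtain ⟨e⟩ := homology_equiv_zmod ops a hZ
  rw [h, Int.natAbs_zero] at e
  -- `ZMod 0` is `ℤ` by definition
  exact ⟨e⟩

end PointHomology

open PointHomology in
theorem homology_of_point_general {X : Type*} {k : ℕ} (ops : Fin k → X → X → X) (a : Fin k → ℤ)
    (t : X) (hone : ∀ x : X, x = t) :
    ((∑ r : Fin k, a r) = 0 → ∀ n : ℕ, Nonempty (HC ops a n ≃ₗ[ℤ] ℤ)) ∧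
    ((∑ r : Fin k, a r) ≠ 0 →
      Nonempty (HC ops a 0 ≃ₗ[ℤ] ℤ) ∧
      (∀ n : ℕ, 0 < n → Even n → Subsingleton (HC ops a n)) ∧
      (∀ n : ℕ, Odd n →
        Nonempty (HC ops a n ≃ₗ[ℤ] ZMod (∑ r : Fin k, a r).natAbs))) := by
  let _ : Unique X := ⟨⟨t⟩, hone⟩
  refine ⟨fun hS n => ?_, fun hS => ⟨?_, fun n hn heven => ?_, fun n hodd => ?_⟩⟩
  · have hc (m : ℕ) : boundaryCoeff a m = 0 := by simp [boundaryCoeff, hS]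
    refine homology_equiv_int ops a ?_ (hc n)
    rcases n with _ | n
    exacts [rfl, ZC_succ_eq_top ops a (hc n)]
  · exact homology_equiv_int ops a rfl (if_pos Even.zero)
  · obtain ⟨m, rfl⟩ := Nat.exists_eq_add_one_of_ne_zero hn.ne'
    have hm : ¬Even m := by simpa [Nat.even_add_one] using heven
    exact homology_subsingleton ops a (by rwa [boundaryCoeff, if_neg hm])
  · obtain ⟨m, rfl⟩ := hodd
    have h := homology_equiv_zmod ops a (ZC_succ_eq_top ops a (if_pos (even_two_mul m)))
    rwa [boundaryCoeff, if_neg (Nat.not_even_iff_odd.mpr (odd_two_mul_add_one m))] at h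

/-- homology of a one-point multispindle `{t}` with scalar sum
`Σ = a₁ + … + aₖ`: if `Σ = 0` then `Hₙ ≅ ℤ` for all `n`; otherwise `H₀ ≅ ℤ`,
`Hₙ = 0` for even `n > 0`, and `Hₙ ≅ ℤ/Σ` for odd `n`. -/
theorem homology_of_point {X : Type*} {k : ℕ} (ops : Fin k → X → X → X) (a : Fin k → ℤ)
    (t : X) (hone : ∀ x : X, x = t)
    (hidem : ∀ (r : Fin k) (x : X), ops r x x = x)
    (hdist : ∀ (r s : Fin k) (x y z : X),
      ops r (ops s x y) z = ops s (ops r x z) (ops r y z)) :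
    ((∑ r : Fin k, a r) = 0 → ∀ n : ℕ, Nonempty (HC ops a n ≃ₗ[ℤ] ℤ)) ∧
    ((∑ r : Fin k, a r) ≠ 0 →
      Nonempty (HC ops a 0 ≃ₗ[ℤ] ℤ) ∧
      (∀ n : ℕ, 0 < n → Even n → Subsingleton (HC ops a n)) ∧
      (∀ n : ℕ, Odd n →
        Nonempty (HC ops a n ≃ₗ[ℤ] ZMod (∑ r : Fin k, a r).natAbs))) :=
  homology_of_point_general ops a t hone
end

section
/- A multishelf satisfying the absorption law is a multispindle: if (X, {⋆_λ}) has at least two operations and (x ⋆_α y) ⋆_β y = y for all x, y and all pairs of distinct operations ⋆_α ≠ ⋆_β, then x ⋆_λ x = x for every operation ⋆_λ and every x ∈ X. -/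
/-- a multishelf (with at least two operations) satisfying the
absorption law `(x ⋆_α y) ⋆_β y = y` (for `α ≠ β`) is a multispindle: every
operation is idempotent, `x ⋆_λ x = x`. -/
theorem absorption_implies_idempotent {X : Type*} {ι : Type*} (ops : ι → X → X → X)
    (hdist : ∀ (r s : ι) (x y z : X),
      ops r (ops s x y) z = ops s (ops r x z) (ops r y z))
    (htwo : ∃ α β : ι, α ≠ β)
    (habs : ∀ (α β : ι), α ≠ β → ∀ x y : X, ops β (ops α x y) y = y) :
    ∀ (lam : ι) (x : X), ops lam x x = x := by
  have key : ∀ l m : ι, l ≠ m → ∀ x : X, ops m x x = x := by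
    intro l m hlm x
    set a := ops l x x with ha
    have h1 : ops m a x = x := habs l m hlm x x
    have h2 : x = ops m a a := by
      calc x = ops l (ops m x x) x := (habs m l hlm.symm x x).symm
        _ = ops m (ops l x x) (ops l x x) := hdist l m x x x
    set t := ops l a x with ht
    have h3 : a = ops m t t := by
      calc a = ops l x x := ha
        _ = ops l (ops m a a) x := by rw [← h2]
        _ = ops m (ops l a x) (ops l a x) := hdist l m a a x
    have h4 : ops m t x = x := habs l m hlm a x
    calc ops m x x = ops m (ops m t x) (ops m t x) := by rw [h4]
      _ = ops m (ops m t t) x := (hdist m m t t x).symm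
      _ = ops m a x := by rw [← h3]
      _ = x := h1
  intro lam x
  obtain ⟨α, β, hab⟩ := htwo
  by_cases h : lam = α
  · exact key β lam (fun e => hab (h ▸ e.symm ▸ rfl)) x
  · exact key α lam (fun e => h e.symm) x
end

section
/- Let (X, {⋆₁,…,⋆ₖ}) be a multishelf with absorption in which every operation is an idempotent element of Bin(X) (a generalized distributive lattice). Then X is irreducible (for every t ∈ X some orbit X ⋆ᵢ t equals X) if and only if every element u ∈ X is a right unit for some operation ⋆ᵢ. -/
/-- a finite generalized distributive lattice (multishelf with
absorption whose operations are idempotent elements of `Bin(X)`) is irreducible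
(for every `t` some orbit `X ⋆ᵢ t` is all of `X`) iff every element is a right
unit for some operation. -/
theorem irreducible_iff_units {X : Type*} [Finite X] {k : ℕ}
    (ops : Fin k → X → X → X)
    (hdist : ∀ (r s : Fin k) (x y z : X),
      ops r (ops s x y) z = ops s (ops r x z) (ops r y z))
    (habs : ∀ (i j : Fin k), i ≠ j → ∀ x y : X, ops j (ops i x y) y = y)
    (hbin : ∀ (i : Fin k) (x y : X), ops i (ops i x y) y = ops i x y) :
    (∀ t : X, ∃ i : Fin k, ∀ z : X, ∃ x : X, z = ops i x t) ↔
      (∀ u : X, ∃ i : Fin k, ∀ x : X, ops i x u = x) := by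
  constructor
  · intro h u
    obtain ⟨i, hi⟩ := h u
    refine ⟨i, fun x => ?_⟩
    have hsurj : Function.Surjective (fun x => ops i x u) := fun z => by
      obtain ⟨x, hx⟩ := hi z; exact ⟨x, hx.symm⟩
    have hinj : Function.Injective (fun x => ops i x u) :=
      Finite.injective_iff_surjective.mpr hsurj
    exact hinj (hbin i x u)
  · intro h t
    obtain ⟨i, hi⟩ := h t
    exact ⟨i, fun z => ⟨z, (hi z).symm⟩⟩
end
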